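/- Let A₂ ∈ ℝ^{I₂×R}, A₃ ∈ ℝ^{I₃×R}, A₄ ∈ ℝ^{I₄×R}. For generic choices of these matrices (i.e., for all (A₂, A₃, A₄) outside a set of Lebesgue measure zero in ℝ^{(I₂+I₃+I₄)R}), if I₂·I₃·I₄ ≥ R then the Khatri-Rao product A₂ ⊙ A₃ ⊙ A₄ ∈ ℝ^{I₂I₃I₄×R} has full column rank R. -/

import Mathlib

/-!
The Khatri–Rao product `A₂ ⊙ A₃ ⊙ A₄` has full column rank as soon as some `R × R` minor of it is
nonzero. Such a minor is a polynomial `P` in the entries of the three factors, so the exceptional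
set lies in the zero set of `P`, which is Lebesgue-null once `P ≠ 0`. That `P ≠ 0` is witnessed
by `A₂(i, r) = r ^ (I₃ I₄ i)`, `A₃(j, r) = r ^ (I₄ j)`, `A₄(l, r) = r ^ l`: the rows of the product
are then the powers `r ^ k`, `k < I₂ I₃ I₄`, in mixed-radix order, and the first `R` of them form a
Vandermonde matrix on the distinct nodes `0, …, R - 1`.
-/

open MeasureTheory MvPolynomial
open scoped Matrix

namespace MvPolynomial

theorem measurableSet_setOf_eval_eq_zero {ι : Type*} [Countable ι] (p : MvPolynomial ι ℝ) :
    MeasurableSet {x : ι → ℝ | eval x p = 0} :=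
  (isClosed_eq p.continuous_eval continuous_const).measurableSet

theorem volume_setOf_eval_eq_zero_of_fin :
    ∀ {n : ℕ} {p : MvPolynomial (Fin n) ℝ}, p ≠ 0 → volume {x : Fin n → ℝ | eval x p = 0} = 0
  | 0, p, hp => by
    rw [eq_C_of_isEmpty p] at hp ⊢
    simp [C_ne_zero.mp hp]
  | n + 1, p, hp => by
    -- Write `p` as a polynomial in `x 0` with coefficients in the other variables: away from the
    -- null set where its leading coefficient vanishes, each slice is a finite set of roots.
    set q := finSuccEquiv ℝ n p
    have hq : q.leadingCoeff ≠ 0 := by simpa [q] using hp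
    have hcons := (volume_preserving_piFinSuccAbove (fun _ : Fin (n + 1) => ℝ) 0).symm
    have hpre : (MeasurableEquiv.piFinSuccAbove (fun _ : Fin (n + 1) => ℝ) 0).symm ⁻¹'
        {x | eval x p = 0} = {z | Polynomial.eval z.1 (q.map (eval z.2)) = 0} := by
      ext ⟨y, s⟩
      simp_rw [Set.mem_preimage, MeasurableEquiv.piFinSuccAbove_symm_apply, Fin.insertNthEquiv,
        Equiv.coe_fn_mk, Fin.insertNth_zero', Set.mem_ofPred_eq, eval_eq_eval_mv_eval', q]
    have hmeas := hpre ▸ (measurableSet_setOf_eval_eq_zero p).preimage hcons.measurable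
    rw [← hcons.measure_preimage (measurableSet_setOf_eval_eq_zero p).nullMeasurableSet, hpre,
      Measure.volume_eq_prod, Measure.prod_apply_symm hmeas]
    refine (lintegral_congr_ae ?_).trans lintegral_zero
    filter_upwards [measure_eq_zero_iff_ae_notMem.mp (volume_setOf_eval_eq_zero_of_fin hq)]
      with s hs
    have hqs : q.map (eval s) ≠ 0 := fun h =>
      hs (by simpa using congrArg (Polynomial.coeff · q.natDegree) h)
    exact (Polynomial.finite_setOfPred_isRoot hqs).measure_zero _

theorem volume_setOf_eval_eq_zero {ι : Type*} [Fintype ι] {p : MvPolynomial ι ℝ} (hp : p ≠ 0) :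
    volume {x : ι → ℝ | eval x p = 0} = 0 := by
  let e := Fintype.equivFin ι
  have hpre : MeasurableEquiv.piCongrLeft (fun _ => ℝ) e ⁻¹' {y | eval y (rename e p) = 0} =
      {x | eval x p = 0} := by
    ext x
    have hx : MeasurableEquiv.piCongrLeft (fun _ => ℝ) e x ∘ e = x :=
      _root_.funext (Equiv.piCongrLeft_apply_apply (fun _ => ℝ) e x)
    simp only [Set.mem_preimage, Set.mem_ofPred_eq, eval_rename, hx]
  rw [← hpre, (volume_measurePreserving_piCongrLeft (fun _ => ℝ) e).measure_preimage
    (measurableSet_setOf_eval_eq_zero _).nullMeasurableSet]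
  exact volume_setOf_eval_eq_zero_of_fin
    ((map_ne_zero_iff _ (rename_injective e e.injective)).mpr hp)

end MvPolynomial

theorem MeasureTheory.measurePreserving_curry_symm (ι κ α : Type*) [Fintype ι] [Fintype κ]
    [MeasurableSpace α] (μ : Measure α) [SigmaFinite μ] :
    MeasurePreserving (MeasurableEquiv.curry ι κ α).symm
      (Measure.pi fun _ => Measure.pi fun _ => μ) (Measure.pi fun _ => μ) := by
  refine ⟨(MeasurableEquiv.curry ι κ α).symm.measurable, (Measure.pi_eq fun s hs => ?_).symm⟩
  have hpre : (MeasurableEquiv.curry ι κ α).symm ⁻¹' Set.univ.pi s =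
      Set.univ.pi fun i => Set.univ.pi fun j => s (i, j) := by
    ext f
    simp [MeasurableEquiv.coe_curry_symm, Set.mem_pi]
  rw [MeasurableEquiv.map_apply, hpre, Measure.pi_pi, Fintype.prod_prod_type]
  simp only [Measure.pi_pi]

def MeasurableEquiv.factorCoords (α β γ κ : Type*) :
    (α → κ → ℝ) × (β → κ → ℝ) × (γ → κ → ℝ) ≃ᵐ ((α × κ) ⊕ (β × κ) ⊕ (γ × κ) → ℝ) :=
  ((MeasurableEquiv.curry _ _ _).symm.prodCongr
      ((MeasurableEquiv.curry _ _ _).symm.prodCongr (MeasurableEquiv.curry _ _ _).symm |>.trans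
        (MeasurableEquiv.sumPiEquivProdPi fun _ => ℝ).symm)).trans
    (MeasurableEquiv.sumPiEquivProdPi fun _ => ℝ).symm

theorem MeasurableEquiv.measurePreserving_factorCoords (α β γ κ : Type*) [Fintype α] [Fintype β]
    [Fintype γ] [Fintype κ] : MeasurePreserving (factorCoords α β γ κ) :=
  ((measurePreserving_curry_symm α κ ℝ volume).prod
    (((measurePreserving_curry_symm β κ ℝ volume).prod
      (measurePreserving_curry_symm γ κ ℝ volume)).trans
    (volume_measurePreserving_sumPiEquivProdPi_symm _))).trans
    (volume_measurePreserving_sumPiEquivProdPi_symm _)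

def khatriRao {α β γ κ R : Type*} [Mul R] (A : Matrix α κ R) (B : Matrix β κ R)
    (C : Matrix γ κ R) : Matrix (α × β × γ) κ R :=
  Matrix.of fun q r => A q.1 r * B q.2.1 r * C q.2.2 r

theorem Matrix.eq_zero_of_mulVec_eq_zero_of_det_submatrix_ne_zero {m n K : Type*} [Fintype n]
    [DecidableEq n] [Field K] {M : Matrix m n K} {σ : n → m} (hσ : (M.submatrix σ id).det ≠ 0)
    {v : n → K} (hv : M *ᵥ v = 0) : v = 0 :=
  eq_zero_of_mulVec_eq_zero hσ (_root_.funext fun k => congrFun hv (σ k))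

def finProdProdFinEquiv (a b c : ℕ) : Fin a × Fin b × Fin c ≃ Fin (a * b * c) :=
  ((Equiv.refl _).prodCongr finProdFinEquiv).trans finProdFinEquiv |>.trans
    (finCongr (mul_assoc a b c).symm)

theorem finProdProdFinEquiv_apply_val {a b c : ℕ} (q : Fin a × Fin b × Fin c) :
    (finProdProdFinEquiv a b c q : ℕ) = q.2.2 + c * q.2.1 + b * c * q.1 := by
  simp [finProdProdFinEquiv, finProdFinEquiv_apply_val]

theorem khatriRao_pow_eq {a b c R : ℕ} :
    khatriRao (Matrix.of fun (i : Fin a) (r : Fin R) => ((r : ℕ) : ℝ) ^ (b * c * i))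
      (Matrix.of fun (j : Fin b) (r : Fin R) => ((r : ℕ) : ℝ) ^ (c * j))
      (Matrix.of fun (l : Fin c) (r : Fin R) => ((r : ℕ) : ℝ) ^ (l : ℕ)) =
    Matrix.of fun q (r : Fin R) => ((r : ℕ) : ℝ) ^ (finProdProdFinEquiv a b c q : ℕ) := by
  ext q r
  simp only [khatriRao, Matrix.of_apply, finProdProdFinEquiv_apply_val, ← pow_add]
  ring_nf

theorem exists_det_khatriRao_submatrix_ne_zero {a b c R : ℕ} (h : R ≤ a * b * c) :
    ∃ (σ : Fin R → Fin a × Fin b × Fin c) (A : Matrix (Fin a) (Fin R) ℝ)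
      (B : Matrix (Fin b) (Fin R) ℝ) (C : Matrix (Fin c) (Fin R) ℝ),
      ((khatriRao A B C).submatrix σ id).det ≠ 0 := by
  let σ := (finProdProdFinEquiv a b c).symm ∘ Fin.castLE h
  refine ⟨σ, .of fun i r => ((r : ℕ) : ℝ) ^ (b * c * i), .of fun j r => ((r : ℕ) : ℝ) ^ (c * j),
    .of fun l r => ((r : ℕ) : ℝ) ^ (l : ℕ), ?_⟩
  have hV : (Matrix.of fun q (r : Fin R) =>
      ((r : ℕ) : ℝ) ^ (finProdProdFinEquiv a b c q : ℕ)).submatrix σ id =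
      (Matrix.vandermonde fun r : Fin R => ((r : ℕ) : ℝ))ᵀ := by
    ext k r
    simp [σ, Matrix.vandermonde]
  rw [khatriRao_pow_eq, hV, Matrix.det_transpose, Matrix.det_vandermonde_ne_zero_iff]
  exact fun r s hrs => Fin.val_injective (Nat.cast_injective hrs)

noncomputable def genericKhatriRao (α β γ κ : Type*) :
    Matrix (α × β × γ) κ (MvPolynomial ((α × κ) ⊕ (β × κ) ⊕ (γ × κ)) ℝ) :=
  khatriRao (.of fun i r => X (.inl (i, r))) (.of fun j r => X (.inr (.inl (j, r))))
    (.of fun l r => X (.inr (.inr (l, r))))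

theorem genericKhatriRao_map_eval {α β γ κ : Type*}
    (p : (α → κ → ℝ) × (β → κ → ℝ) × (γ → κ → ℝ)) :
    (genericKhatriRao α β γ κ).map (eval (MeasurableEquiv.factorCoords α β γ κ p)) =
      khatriRao p.1 p.2.1 p.2.2 := by
  ext q r
  simp only [genericKhatriRao, khatriRao, Matrix.of_apply, Matrix.map_apply, map_mul, eval_X]
  rfl

theorem stmt_9 (I₂ I₃ I₄ R : ℕ) (hdim : I₂ * I₃ * I₄ ≥ R) :
    volume {p : (Fin I₂ → Fin R → ℝ) × (Fin I₃ → Fin R → ℝ) × (Fin I₄ → Fin R → ℝ) |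
      ¬ ∀ v : Fin R → ℝ,
        Matrix.mulVec
          (fun (q : Fin I₂ × Fin I₃ × Fin I₄) (r : Fin R) =>
            p.1 q.1 r * p.2.1 q.2.1 r * p.2.2 q.2.2 r) v = 0 → v = 0} = 0 := by
  obtain ⟨σ, A, B, C, hABC⟩ := exists_det_khatriRao_submatrix_ne_zero hdim
  set Θ := MeasurableEquiv.factorCoords (Fin I₂) (Fin I₃) (Fin I₄) (Fin R)
  set P := ((genericKhatriRao (Fin I₂) (Fin I₃) (Fin I₄) (Fin R)).submatrix σ id).det
  have heval (p) : eval (Θ p) P = ((khatriRao p.1 p.2.1 p.2.2).submatrix σ id).det := by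
    rw [RingHom.map_det, RingHom.mapMatrix_apply, ← Matrix.submatrix_map, genericKhatriRao_map_eval]
  have hP : P ≠ 0 := fun h => hABC (by rw [← heval (A, B, C), h, map_zero])
  have hnull : volume (Θ ⁻¹' {x | eval x P = 0}) = 0 := by
    rw [(MeasurableEquiv.measurePreserving_factorCoords _ _ _ _).measure_preimage
      (measurableSet_setOf_eval_eq_zero P).nullMeasurableSet]
    exact volume_setOf_eval_eq_zero hP
  refine measure_mono_null (fun p hp => ?_) hnull
  by_contra hdet
  rw [Set.mem_preimage, Set.mem_ofPred_eq, heval] at hdet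
  exact hp fun v => Matrix.eq_zero_of_mulVec_eq_zero_of_det_submatrix_ne_zero hdet
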